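/- arXiv:2002.08524 — 2 statements merged into one kernel-verified Lean document; each statement's English description precedes it below -/
import Mathlib

section
/- Let ℓ be a positive integer and for q = (q_1,…,q_{ℓ−1}) ∈ ℂ^{ℓ−1} let P_q(y) = 1 + q_1 y + ⋯ + q_{ℓ−1} y^{ℓ−1} + y^ℓ. For every permutation σ of {1,…,ℓ} there exist a continuous loop γ : [0,1] → ℂ^{ℓ−1} with γ(0) = γ(1) = 0 and continuous functions κ_1,…,κ_ℓ : [0,1] → ℂ such that P_{γ(t)}(κ_j(t)) = 0 for all t ∈ [0,1] and all j ∈ {1,…,ℓ}, κ_j(0) = ζ_j, and κ_j(1) = ζ_{σ(j)}. (Lemma 5.2 of the paper: the monodromy of solutions of the mirror curve equation realizes every permutation.) -/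
open Complex

/-- The restricted mirror curve polynomial `P_q(y) = 1 + q_1 y + ⋯ + q_{ℓ-1} y^{ℓ-1} + y^ℓ`. -/
noncomputable def mirrorP (ℓ : ℕ) (q : Fin (ℓ - 1) → ℂ) (y : ℂ) : ℂ :=
  1 + ∑ a : Fin (ℓ - 1), q a * y ^ ((a : ℕ) + 1) + y ^ ℓ

/-- The roots `ζ_j = exp(π√-1(2j-1)/ℓ)`, `j = 1, …, ℓ`, of `P_0(y) = 1 + y^ℓ`. -/
noncomputable def zetaRoot (ℓ : ℕ) (j : Fin ℓ) : ℂ :=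
  Complex.exp (Real.pi * Complex.I * (2 * ((j : ℕ) : ℂ) + 1) / (ℓ : ℂ))

/-! Let the roots travel along `κ_j(t) = exp((1 - t) w_j + t w_{σ j})`, where
`w_j = π i (2j + 1) / ℓ` so that `ζ_j = exp w_j`, and let `γ(t)` be the middle coefficients of
`∏ (X - κ_j(t))`. Because `σ` permutes the `w_j`, the exponent `∑_j ((1 - t) w_j + t w_{σ j})` does
not depend on `t`, so the product of the roots, and with it the constant coefficient `1`, is
preserved along the loop. At `t = 0` and `t = 1` the roots are the `ζ_j` in some order, so the
polynomial is `X^ℓ + 1` and `γ` vanishes. -/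

namespace MirrorCurve

open Polynomial

section Coefficients

variable {ι T R : Type*} [TopologicalSpace T] [CommRing R] [TopologicalSpace R]
  [IsTopologicalRing R]

theorem continuous_coeff_prod_X_sub_C [Fintype ι] {f : ι → T → R} (hf : ∀ j, Continuous (f j))
    {k : ℕ} (hk : k ≤ Fintype.card ι) :
    Continuous fun t => (∏ j, (X - C (f j t))).coeff k := by
  simp_rw [sub_eq_add_neg, ← map_neg C, Finset.prod_X_add_C_coeff _ _ hk]
  fun_prop

end Coefficients

theorem coeff_zero_prod_X_sub_C {ι R : Type*} [CommRing R] (s : Finset ι) (f : ι → R) :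
    (∏ i ∈ s, (X - C (f i))).coeff 0 = (-1) ^ s.card * ∏ i ∈ s, f i := by
  simp [coeff_zero_prod, Finset.prod_neg]

noncomputable def mirrorCoeffs (ℓ : ℕ) (Q : ℂ[X]) : Fin (ℓ - 1) → ℂ :=
  fun a => Q.coeff ((a : ℕ) + 1)

theorem mirrorP_mirrorCoeffs {ℓ : ℕ} (hℓ : 0 < ℓ) {Q : ℂ[X]} (hm : Q.Monic)
    (hd : Q.natDegree = ℓ) (h0 : Q.coeff 0 = 1) (y : ℂ) :
    mirrorP ℓ (mirrorCoeffs ℓ Q) y = Q.eval y := by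
  obtain ⟨m, rfl⟩ : ∃ m, ℓ = m + 1 := ⟨ℓ - 1, (Nat.succ_pred_eq_of_pos hℓ).symm⟩
  have hlead : Q.coeff (m + 1) = 1 := hd ▸ hm.coeff_natDegree
  rw [eval_eq_sum_range, hd, Finset.sum_range_succ, Finset.sum_range_succ', hlead, h0, mirrorP]
  simp only [mirrorCoeffs]
  rw [Fin.sum_univ_eq_sum_range (fun i => Q.coeff (i + 1) * y ^ (i + 1)) (m + 1 - 1),
    Nat.add_sub_cancel]
  ring

theorem mirrorCoeffs_X_pow_add_one (ℓ : ℕ) : mirrorCoeffs ℓ (X ^ ℓ + 1) = 0 := by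
  funext a
  have ha : (a : ℕ) + 1 ≠ ℓ := by omega
  simp [mirrorCoeffs, coeff_X_pow, coeff_one, ha]

section RootPaths

variable {ι : Type*} (w : ι → ℂ) (σ : Equiv.Perm ι)

noncomputable def rootPath (j : ι) (t : ℝ) : ℂ :=
  exp ((1 - t) * w j + t * w (σ j))

theorem continuous_rootPath (j : ι) : Continuous (rootPath w σ j) := by
  unfold rootPath
  fun_prop

theorem rootPath_zero (j : ι) : rootPath w σ j 0 = exp (w j) := by
  simp [rootPath]

theorem rootPath_one (j : ι) : rootPath w σ j 1 = exp (w (σ j)) := by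
  simp [rootPath]

theorem prod_rootPath [Fintype ι] (t : ℝ) : ∏ j, rootPath w σ j t = exp (∑ j, w j) := by
  simp only [rootPath]
  rw [← exp_sum, Finset.sum_add_distrib, ← Finset.mul_sum, ← Finset.mul_sum,
    Equiv.sum_comp σ w]
  ring_nf

end RootPaths

noncomputable def zetaArg (ℓ : ℕ) (j : Fin ℓ) : ℂ :=
  Real.pi * I * (2 * ((j : ℕ) : ℂ) + 1) / (ℓ : ℂ)

theorem exp_zetaArg (ℓ : ℕ) (j : Fin ℓ) : exp (zetaArg ℓ j) = zetaRoot ℓ j := rfl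

theorem prod_X_sub_C_zetaRoot {ℓ : ℕ} (hℓ : 0 < ℓ) :
    ∏ j : Fin ℓ, (X - C (zetaRoot ℓ j)) = X ^ ℓ + 1 := by
  have hℓ' : (ℓ : ℂ) ≠ 0 := Nat.cast_ne_zero.2 hℓ.ne'
  have hpow : exp (Real.pi * I / ℓ) ^ ℓ = -1 := by
    rw [← exp_nat_mul, mul_div_cancel₀ _ hℓ', exp_pi_mul_I]
  have hfactor := X_pow_sub_C_eq_prod (isPrimitiveRoot_exp ℓ hℓ.ne') hℓ hpow
  have hroot (i : ℕ) : exp (2 * Real.pi * I / ℓ) ^ i * exp (Real.pi * I / ℓ) =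
      exp (Real.pi * I * (2 * (i : ℂ) + 1) / ℓ) := by
    rw [← exp_nat_mul, ← exp_add]
    ring_nf
  simp_rw [hroot, ← Fin.prod_univ_eq_prod_range, map_neg, map_one, sub_neg_eq_add] at hfactor
  exact hfactor.symm

end MirrorCurve

open MirrorCurve Polynomial in
/-- Lemma 5.2: the monodromy of solutions of the mirror curve equation realizes every
permutation of the roots. -/
theorem stmt0 (ℓ : ℕ) (hℓ : 0 < ℓ) (σ : Equiv.Perm (Fin ℓ)) :
    ∃ (γ : ℝ → (Fin (ℓ - 1) → ℂ)) (κ : Fin ℓ → ℝ → ℂ),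
      ContinuousOn γ (Set.Icc 0 1) ∧ γ 0 = 0 ∧ γ 1 = 0 ∧
      (∀ j, ContinuousOn (κ j) (Set.Icc 0 1)) ∧
      (∀ t ∈ Set.Icc (0 : ℝ) 1, ∀ j, mirrorP ℓ (γ t) (κ j t) = 0) ∧
      (∀ j, κ j 0 = zetaRoot ℓ j) ∧
      (∀ j, κ j 1 = zetaRoot ℓ (σ j)) := by
  let κ := rootPath (zetaArg ℓ) σ
  let Q : ℝ → ℂ[X] := fun t => ∏ j, (X - C (κ j t))
  have hQ0 : Q 0 = X ^ ℓ + 1 := by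
    simp only [Q, κ, rootPath_zero, exp_zetaArg, prod_X_sub_C_zetaRoot hℓ]
  have hQ1 : Q 1 = X ^ ℓ + 1 := by
    simp only [Q, κ, rootPath_one, exp_zetaArg]
    rw [Equiv.prod_comp σ fun j => X - C (zetaRoot ℓ j), prod_X_sub_C_zetaRoot hℓ]
  have hconst (t : ℝ) : (Q t).coeff 0 = 1 := calc
    (Q t).coeff 0 = (Q 0).coeff 0 := by simp only [Q, coeff_zero_prod_X_sub_C, κ, prod_rootPath]
    _ = 1 := by simp [hQ0, hℓ.ne]
  refine ⟨fun t => mirrorCoeffs ℓ (Q t), κ, ?_, by simp only [hQ0, mirrorCoeffs_X_pow_add_one],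
    by simp only [hQ1, mirrorCoeffs_X_pow_add_one],
    fun j => (continuous_rootPath _ σ j).continuousOn, fun t _ j => ?_,
    fun j => rootPath_zero _ σ j, fun j => rootPath_one _ σ j⟩
  · refine Continuous.continuousOn (continuous_pi fun a => ?_)
    exact continuous_coeff_prod_X_sub_C (continuous_rootPath _ σ) (by rw [Fintype.card_fin]; omega)
  · rw [mirrorP_mirrorCoeffs hℓ (monic_prod_X_sub_C _ _)
      (by simp [natDegree_finsetProd_X_sub_C_eq_card]) (hconst t), eval_prod]
    exact Finset.prod_eq_zero (Finset.mem_univ j) (by simp)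
end

section
/- Let ℓ be a positive integer, let I ⊂ ℂ[κ_1,…,κ_ℓ] be the ideal generated by κ_1⋯κ_ℓ − (−1)^ℓ, and let φ : ℂ[q_1,…,q_{ℓ−1}] → ℂ[κ_1,…,κ_ℓ]/I be the ℂ-algebra homomorphism with φ(q_a) = class of (−1)^{ℓ−a} e_{ℓ−a}(κ_1,…,κ_ℓ). If F ∈ ℂ[κ_1,…,κ_ℓ] satisfies σ·F − F ∈ I for every permutation σ of the variables (i.e. the class of F in the quotient is S_ℓ-invariant), then there exists G ∈ ℂ[q_1,…,q_{ℓ−1}] with F − (the chosen polynomial representative of) φ(G) ∈ I; that is, the image of φ equals the S_ℓ-invariant subring of ℂ[κ_1,…,κ_ℓ]/I. -/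
/-!
Averaging over `S_ℓ` (possible since `ℓ!` is invertible in `ℂ`) replaces `F` by a genuinely
symmetric polynomial with the same class modulo `I`. By the fundamental theorem of symmetric
polynomials that polynomial is a polynomial in `e_1, …, e_ℓ`. Modulo `I`, the top one `e_ℓ` is the
constant `(-1)^ℓ`, and `e_k = ± φ(q_{ℓ-k})` for `k < ℓ`, so its class lies in the image of `φ`.
-/

open MvPolynomial

/-- The ideal `I = (κ_1 ⋯ κ_ℓ - (-1)^ℓ)` of `ℂ[κ_1, …, κ_ℓ]`. -/
noncomputable def hyperIdeal (ℓ : ℕ) : Ideal (MvPolynomial (Fin ℓ) ℂ) :=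
  Ideal.span {(∏ i : Fin ℓ, (X i : MvPolynomial (Fin ℓ) ℂ)) - C ((-1 : ℂ) ^ ℓ)}

/-- The ℂ-algebra homomorphism `φ : ℂ[q_1, …, q_{ℓ-1}] → ℂ[κ_1, …, κ_ℓ]/I`
sending `q_a` to the class of `(-1)^{ℓ-a} e_{ℓ-a}(κ_1, …, κ_ℓ)` (Vieta's relations). -/
noncomputable def vietaHom (ℓ : ℕ) :
    MvPolynomial (Fin (ℓ - 1)) ℂ →ₐ[ℂ] (MvPolynomial (Fin ℓ) ℂ ⧸ hyperIdeal ℓ) :=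
  aeval fun a : Fin (ℓ - 1) =>
    Ideal.Quotient.mk (hyperIdeal ℓ)
      ((-1 : MvPolynomial (Fin ℓ) ℂ) ^ (ℓ - ((a : ℕ) + 1)) *
        esymm (Fin ℓ) ℂ (ℓ - ((a : ℕ) + 1)))

namespace MvPolynomial

section Symmetrize

variable {σ K : Type*} [Fintype σ] [DecidableEq σ] [Field K]

noncomputable def symmetrize (F : MvPolynomial σ K) : MvPolynomial σ K :=
  (Fintype.card (Equiv.Perm σ) : K)⁻¹ • ∑ τ : Equiv.Perm σ, rename τ F

theorem isSymmetric_symmetrize (F : MvPolynomial σ K) : (symmetrize F).IsSymmetric := by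
  intro τ
  rw [symmetrize, map_smul, map_sum]
  congr 1
  simp_rw [rename_rename]
  exact Fintype.sum_equiv (Equiv.mulLeft τ) _ _ fun _ => rfl

theorem mk_symmetrize [CharZero K] {I : Ideal (MvPolynomial σ K)} {F : MvPolynomial σ K}
    (hF : ∀ τ : Equiv.Perm σ, rename τ F - F ∈ I) :
    Ideal.Quotient.mk I (symmetrize F) = Ideal.Quotient.mk I F := by
  have hcard : (Fintype.card (Equiv.Perm σ) : K) ≠ 0 := Nat.cast_ne_zero.2 Fintype.card_ne_zero
  have hτ (τ : Equiv.Perm σ) : Ideal.Quotient.mkₐ K I (rename τ F) = Ideal.Quotient.mkₐ K I F :=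
    Ideal.Quotient.mk_eq_mk_iff_sub_mem _ _ |>.2 (hF τ)
  rw [← Ideal.Quotient.mkₐ_eq_mk K, symmetrize, map_smul, map_sum,
    Finset.sum_congr rfl fun τ _ => hτ τ, Finset.sum_const, Finset.card_univ,
    ← Nat.cast_smul_eq_nsmul K, smul_smul, inv_mul_cancel₀ hcard, one_smul]

end Symmetrize

theorem map_mem_of_isSymmetric {σ R A : Type*} [Fintype σ] [CommRing R] [CommSemiring A]
    [Algebra R A] {n : ℕ} (hn : Fintype.card σ ≤ n) (ψ : MvPolynomial σ R →ₐ[R] A)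
    {S : Subalgebra R A} (hS : ∀ i : Fin n, ψ (esymm σ R (i + 1)) ∈ S)
    {p : MvPolynomial σ R} (hp : p.IsSymmetric) : ψ p ∈ S := by
  obtain ⟨P, rfl⟩ : ∃ P, aeval (fun i : Fin n => esymm σ R (i + 1)) P = p := by
    obtain ⟨P, hP⟩ := esymmAlgHom_surjective R hn ⟨p, hp⟩
    exact ⟨P, by rw [← esymmAlgHom_apply, hP]⟩
  rw [← AlgHom.comp_apply, comp_aeval]
  have hP : aeval (fun i : Fin n => ψ (esymm σ R (i + 1))) P ∈
      Algebra.adjoin R (Set.range fun i : Fin n => ψ (esymm σ R (i + 1))) := by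
    rw [← aeval_range]
    exact AlgHom.mem_range_self _ P
  exact Algebra.adjoin_le (Set.range_subset_iff.2 hS) hP

theorem esymm_card (σ R : Type*) [Fintype σ] [CommSemiring R] :
    esymm σ R (Fintype.card σ) = ∏ i, X i := by
  simp [esymm, ← Finset.card_univ, Finset.powersetCard_self]

end MvPolynomial

theorem mk_esymm_self (ℓ : ℕ) :
    Ideal.Quotient.mk (hyperIdeal ℓ) (esymm (Fin ℓ) ℂ ℓ) = algebraMap ℂ _ ((-1) ^ ℓ) := by
  have h := esymm_card (Fin ℓ) ℂ
  rw [Fintype.card_fin] at h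
  rw [h, ← Ideal.Quotient.mk_algebraMap, Ideal.Quotient.mk_eq_mk_iff_sub_mem]
  exact Ideal.subset_span rfl

theorem mk_esymm_mem_range_vietaHom (ℓ : ℕ) (i : Fin ℓ) :
    Ideal.Quotient.mk (hyperIdeal ℓ) (esymm (Fin ℓ) ℂ (i + 1)) ∈ (vietaHom ℓ).range := by
  rcases eq_or_ne ((i : ℕ) + 1) ℓ with htop | hlt
  · rw [htop, mk_esymm_self]
    exact Subalgebra.algebraMap_mem _ _
  · rw [AlgHom.mem_range]
    refine ⟨C ((-1) ^ ((i : ℕ) + 1)) * X ⟨ℓ - (i + 2), by omega⟩, ?_⟩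
    -- `φ(q_{ℓ-i-2}) = (-1)^(i+1) e_{i+1}`, and the sign squares to `1`.
    have hk : ℓ - (ℓ - (i + 2) + 1) = i + 1 := by omega
    rw [vietaHom, map_mul, aeval_C, aeval_X, hk, ← Ideal.Quotient.mk_algebraMap, ← map_mul,
      map_pow, map_neg, map_one, ← mul_assoc, ← pow_add, ← two_mul, pow_mul]
    simp

theorem stmt5_general (ℓ : ℕ) (F : MvPolynomial (Fin ℓ) ℂ)
    (hF : ∀ σ : Equiv.Perm (Fin ℓ),
      rename (⇑σ) F - F ∈ hyperIdeal ℓ) :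
    ∃ G : MvPolynomial (Fin (ℓ - 1)) ℂ,
      Ideal.Quotient.mk (hyperIdeal ℓ) F = vietaHom ℓ G := by
  have hsymm : Ideal.Quotient.mkₐ ℂ (hyperIdeal ℓ) (symmetrize F) ∈ (vietaHom ℓ).range :=
    map_mem_of_isSymmetric (Fintype.card_fin ℓ).le _ (mk_esymm_mem_range_vietaHom ℓ)
      (isSymmetric_symmetrize F)
  obtain ⟨G, hG⟩ := (AlgHom.mem_range _).1 hsymm
  exact ⟨G, by rw [hG, Ideal.Quotient.mkₐ_eq_mk, mk_symmetrize hF]⟩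

/-- From the proof of Lemma 5.2: the image of `φ` equals the `S_ℓ`-invariant subring of
`ℂ[κ_1, …, κ_ℓ]/I`:  if the class of `F` is invariant under all permutations of the
variables, then it lies in the range of `φ`. -/
theorem stmt5 (ℓ : ℕ) (hℓ : 0 < ℓ) (F : MvPolynomial (Fin ℓ) ℂ)
    (hF : ∀ σ : Equiv.Perm (Fin ℓ),
      rename (⇑σ) F - F ∈ hyperIdeal ℓ) :
    ∃ G : MvPolynomial (Fin (ℓ - 1)) ℂ,
      Ideal.Quotient.mk (hyperIdeal ℓ) F = vietaHom ℓ G :=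
  stmt5_general ℓ F hF
end
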